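/- Let I ⊂ (1/2, 1) be an interval, and suppose that for every λ* ∈ I that is a zero of a {0,±1} polynomial with constant term 1, R_2(0, λ*, 2^N) → ∞ faster than 2^{N^{1−ε}} (which holds by the entropy-drop bound). Suppose also such zeros are dense in I. Then there exists an uncountable set E ⊂ I such that for all λ ∈ E and all s > 0, R_2(s, λ, 2^N) ≥ 2^{N^{1−ε}} for infinitely many N. -/

import Mathlib

open Filter

/-- `π_λ^N(ω) = Σ_{n=0}^{N-1} ω_n λ^n`. -/
noncomputable def piN (lam : ℝ) (N : ℕ) (ω : Fin N → Bool) : ℝ :=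
  ∑ n : Fin N, if ω n then lam ^ (n : ℕ) else 0

/-- Pair correlation for the sets `A_N(λ) = (1-λ)·A'_N(λ)`:
`R₂(s,λ,2^N) = 2^{-N} · #{(ω,τ) : ω ≠ τ, |(1-λ)(π_λ^N(ω) - π_λ^N(τ))| ≤ s·2^{-N}}`. -/
noncomputable def R2 (s lam : ℝ) (N : ℕ) : ℝ :=
  ((Finset.univ.filter (fun p : (Fin N → Bool) × (Fin N → Bool) =>
      p.1 ≠ p.2 ∧ |(1 - lam) * (piN lam N p.1 - piN lam N p.2)| ≤ s / 2 ^ N)).card : ℝ) / 2 ^ N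

/-- `λ` is a zero of a `{0,±1}` polynomial with constant term 1. -/
def IsPolZero (lam : ℝ) : Prop :=
  ∃ k : ℕ, ∃ c : ℕ → ℝ, (∀ n, c n ∈ ({-1, 0, 1} : Set ℝ)) ∧
    1 + ∑ n ∈ Finset.Icc 1 k, c n * lam ^ n = 0

/-!
The zeros of `{0, ±1}` polynomials are dense in `[a, b]`, and each of them has
`R₂(2^{-k}, ·, 2^N) ≥ 2^{N^{1-ε}}` for some `N ≥ k`. Counting pairs at a strict distance
`< s 2^{-N}` is lower semicontinuous in `λ`, so this bound persists on an open set `U_k`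
containing all these zeros. By Baire's theorem `[a, b] ∩ ⋂ₖ U_k` is residual in `[a, b]`,
hence uncountable, and each of its points satisfies the bound for arbitrarily small
`s = 2^{-k}` along arbitrarily large `N`.
-/

open Topology Set
open scoped Finset

section Baire

variable {X : Type*} [TopologicalSpace X]

theorem Set.Countable.isMeagre [T1Space X] [∀ x : X, (𝓝[≠] x).NeBot] {s : Set X}
    (hs : s.Countable) : IsMeagre s := by
  rw [← biUnion_of_singleton s]
  exact isMeagre_biUnion hs fun x _ =>
    residual_of_dense_open isOpen_compl_singleton (dense_compl_singleton x)

theorem not_countable_inter_of_mem_residual [BaireSpace X] [T1Space X]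
    [∀ x : X, (𝓝[≠] x).NeBot] {V S : Set X} (hV : IsOpen V) (hne : V.Nonempty)
    (hS : S ∈ residual X) : ¬ (V ∩ S).Countable := by
  intro hcount
  have hSc : IsMeagre Sᶜ := by rwa [IsMeagre, compl_compl]
  refine not_isMeagre_of_isOpen hV hne ((hcount.isMeagre.union hSc).mono fun x hx => ?_)
  by_cases hxS : x ∈ S
  exacts [Or.inl ⟨hx, hxS⟩, Or.inr hxS]

theorem dense_union_compl_of_subset_closure {C D U : Set X} (hCD : C ⊆ closure D)
    (hDU : D ⊆ U) : Dense (U ∪ Cᶜ) := by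
  refine dense_iff_closure_eq.2 (eq_univ_of_forall fun x => ?_)
  by_cases hx : x ∈ C
  · exact closure_mono (hDU.trans subset_union_left) (hCD hx)
  · exact subset_closure (Or.inr hx)

end Baire

theorem eventually_card_filter_lt_le {X ι : Type*} [TopologicalSpace X] [Fintype ι]
    (P : ι → Prop) [DecidablePred P] {f : ι → X → ℝ} (hf : ∀ i, Continuous (f i)) (t : ℝ)
    (x₀ : X) : ∀ᶠ x in 𝓝 x₀, #{i | P i ∧ f i x₀ < t} ≤ #{i | P i ∧ f i x < t} := by
  have hstay : ∀ᶠ x in 𝓝 x₀, ∀ i ∈ ({i | P i ∧ f i x₀ < t} : Finset ι), f i x < t :=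
    (Finset.eventually_all _).2 fun i hi =>
      (hf i).continuousAt.eventually_lt continuousAt_const (Finset.mem_filter.1 hi).2.2
  filter_upwards [hstay] with x hx
  exact Finset.card_le_card fun i hi =>
    Finset.mem_filter.2 ⟨Finset.mem_univ i, (Finset.mem_filter.1 hi).2.1, hx i hi⟩

theorem continuous_piN (N : ℕ) (ω : Fin N → Bool) : Continuous fun lam => piN lam N ω :=
  continuous_finsetSum _ fun n _ => by
    cases ω n
    exacts [continuous_const, continuous_pow _]

/-- Unlike `R2`, this strict version is lower semicontinuous in `λ`. -/
noncomputable def R2s (s lam : ℝ) (N : ℕ) : ℝ :=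
  ((Finset.univ.filter (fun p : (Fin N → Bool) × (Fin N → Bool) =>
      p.1 ≠ p.2 ∧ |(1 - lam) * (piN lam N p.1 - piN lam N p.2)| < s / 2 ^ N)).card : ℝ) / 2 ^ N

theorem isOpen_setOf_le_R2s (s c : ℝ) (N : ℕ) : IsOpen {lam | c ≤ R2s s lam N} := by
  refine isOpen_iff_mem_nhds.2 fun lam₀ hlam₀ => ?_
  have hf : ∀ p : (Fin N → Bool) × (Fin N → Bool),
      Continuous fun lam : ℝ => |(1 - lam) * (piN lam N p.1 - piN lam N p.2)| := fun p =>
    ((continuous_const.sub continuous_id).mul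
      ((continuous_piN N p.1).sub (continuous_piN N p.2))).abs
  filter_upwards [eventually_card_filter_lt_le (fun p => p.1 ≠ p.2) hf (s / 2 ^ N) lam₀]
    with lam hlam
  exact hlam₀.trans (by unfold R2s; gcongr)

theorem R2_mono {s s' : ℝ} (h : s ≤ s') (lam : ℝ) (N : ℕ) : R2 s lam N ≤ R2 s' lam N := by
  unfold R2
  gcongr

theorem R2s_le_R2 (s lam : ℝ) (N : ℕ) : R2s s lam N ≤ R2 s lam N := by
  unfold R2s R2
  gcongr
  exact le_of_lt

theorem R2_zero_le_R2s {s : ℝ} (hs : 0 < s) (lam : ℝ) (N : ℕ) : R2 0 lam N ≤ R2s s lam N := by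
  unfold R2s R2
  gcongr

def largeCorrSet (g : ℕ → ℝ) (k : ℕ) : Set ℝ :=
  ⋃ N ≥ k, {lam | g N ≤ R2s ((1 / 2) ^ k) lam N}

theorem isOpen_largeCorrSet (g : ℕ → ℝ) (k : ℕ) : IsOpen (largeCorrSet g k) :=
  isOpen_biUnion fun N _ => isOpen_setOf_le_R2s _ _ N

theorem mem_largeCorrSet_of_tendsto {g : ℕ → ℝ} (hg : ∀ N, 0 < g N) {lam : ℝ}
    (h : Tendsto (fun N => R2 0 lam N / g N) atTop atTop) (k : ℕ) : lam ∈ largeCorrSet g k := by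
  obtain ⟨N, hN, hkN⟩ := ((h.eventually_ge_atTop 1).and (eventually_ge_atTop k)).exists
  exact mem_iUnion₂.2
    ⟨N, hkN, ((one_le_div (hg N)).1 hN).trans (R2_zero_le_R2s (by positivity) _ _)⟩

theorem frequently_le_R2_of_forall_mem_largeCorrSet {g : ℕ → ℝ} {lam : ℝ}
    (h : ∀ k, lam ∈ largeCorrSet g k) {s : ℝ} (hs : 0 < s) :
    ∃ᶠ N in atTop, g N ≤ R2 s lam N := by
  refine frequently_atTop.2 fun m => ?_
  obtain ⟨k₀, hk₀⟩ := exists_pow_lt_of_lt_one hs (by norm_num : (1 / 2 : ℝ) < 1)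
  obtain ⟨N, hkN, hN⟩ := mem_iUnion₂.1 (h (max k₀ m))
  have hscale : (1 / 2 : ℝ) ^ max k₀ m ≤ s :=
    (pow_le_pow_of_le_one (by norm_num) (by norm_num) (le_max_left k₀ m)).trans hk₀.le
  exact ⟨N, (le_max_right k₀ m).trans hkN, hN.trans ((R2s_le_R2 _ _ _).trans (R2_mono hscale _ _))⟩

theorem stmt_18_general (a b : ℝ) (hab : a < b)
    (ε : ℝ)
    (hdense : Set.Icc a b ⊆ closure {lam : ℝ | lam ∈ Set.Icc a b ∧ IsPolZero lam})
    (hgrow : ∀ lam ∈ Set.Icc a b, IsPolZero lam →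
      Tendsto (fun N : ℕ => R2 0 lam N / (2 : ℝ) ^ ((N : ℝ) ^ (1 - ε))) atTop atTop) :
    ∃ E ⊆ Set.Icc a b, ¬ E.Countable ∧
      ∀ lam ∈ E, ∀ s > 0, ∃ᶠ N : ℕ in atTop, (2 : ℝ) ^ ((N : ℝ) ^ (1 - ε)) ≤ R2 s lam N := by
  set U := largeCorrSet fun N : ℕ => (2 : ℝ) ^ ((N : ℝ) ^ (1 - ε))
  have hzeros : ∀ k, {lam | lam ∈ Icc a b ∧ IsPolZero lam} ⊆ U k := fun k lam hlam =>
    mem_largeCorrSet_of_tendsto (fun N => by positivity) (hgrow lam hlam.1 hlam.2) k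
  have hres : (⋂ k, U k ∪ (Icc a b)ᶜ) ∈ residual ℝ :=
    countable_iInter_mem.2 fun k => residual_of_dense_open
      ((isOpen_largeCorrSet _ k).union isClosed_Icc.isOpen_compl)
      (dense_union_compl_of_subset_closure hdense (hzeros k))
  refine ⟨Icc a b ∩ ⋂ k, U k, inter_subset_left, fun hcount => ?_, ?_⟩
  · refine not_countable_inter_of_mem_residual isOpen_Ioo (nonempty_Ioo.2 hab) hres
      (hcount.mono fun lam ⟨hlam, hU⟩ => ?_)
    have hlam' : lam ∈ Icc a b := Ioo_subset_Icc_self hlam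
    exact ⟨hlam', mem_iInter.2 fun k => ((mem_iInter.1 hU k).resolve_right (not_not.2 hlam'))⟩
  · rintro lam ⟨-, hlam⟩ s hs
    exact frequently_le_R2_of_forall_mem_largeCorrSet (mem_iInter.1 hlam) hs

/-- Nested-interval construction: if the `{0,±1}` polynomial zeros are dense in
`I = [a,b] ⊂ (1/2,1)` and at each such zero `R₂(0,·,2^N)` grows faster than `2^{N^{1-ε}}`,
then there is an uncountable set `E ⊆ I` such that for every `λ ∈ E` and every `s > 0`,
`R₂(s,λ,2^N) ≥ 2^{N^{1-ε}}` for infinitely many `N`. -/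
theorem stmt_18 (a b : ℝ) (ha : 1/2 < a) (hab : a < b) (hb : b < 1)
    (ε : ℝ) (hε0 : 0 < ε) (hε1 : ε < 1)
    (hdense : Set.Icc a b ⊆ closure {lam : ℝ | lam ∈ Set.Icc a b ∧ IsPolZero lam})
    (hgrow : ∀ lam ∈ Set.Icc a b, IsPolZero lam →
      Tendsto (fun N : ℕ => R2 0 lam N / (2 : ℝ) ^ ((N : ℝ) ^ (1 - ε))) atTop atTop) :
    ∃ E ⊆ Set.Icc a b, ¬ E.Countable ∧
      ∀ lam ∈ E, ∀ s > 0, ∃ᶠ N : ℕ in atTop, (2 : ℝ) ^ ((N : ℝ) ^ (1 - ε)) ≤ R2 s lam N :=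
  stmt_18_general a b hab ε hdense hgrow
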